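/- For all integers i, k ≥ 0 and n ≥ 2: (a(i,k) : ℝ) − L(n,k)·b(i,k) = 2·ω^{−i}·(H(2k) + n·P(2k)) / (H(2k)·(√(n²−1)+1) + 2n·P(2k) − (√(n²−1)−1)). In particular a(i,k) > L(n,k)·b(i,k). -/

import Mathlib

/-- Pell numbers: P 0 = 0, P 1 = 1, P (m+2) = 2·P (m+1) + P m. -/
def pell : ℕ → ℕ
  | 0 => 0
  | 1 => 1
  | m + 2 => 2 * pell (m + 1) + pell m

/-- Half-companion Pell numbers: H 0 = 1, H 1 = 1, H (m+2) = 2·H (m+1) + H m. -/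
def hpell : ℕ → ℕ
  | 0 => 1
  | 1 => 1
  | m + 2 => 2 * hpell (m + 1) + hpell m

/-- The solution of x 0 = x0, x 1 = x1, x (i+2) = 2n·x (i+1) − x i. -/
def rec2 (n : ℕ) (x0 x1 : ℤ) : ℕ → ℤ
  | 0 => x0
  | 1 => x1
  | i + 2 => 2 * n * rec2 n x0 x1 (i + 1) - rec2 n x0 x1 i

/-- a i : a 0 = 1, a 1 = n. -/
def sa (n : ℕ) : ℕ → ℤ := rec2 n 1 n
/-- b i : b 0 = 0, b 1 = 1. -/
def sb (n : ℕ) : ℕ → ℤ := rec2 n 0 1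
/-- c i : c 0 = 1, c 1 = 2n+1. -/
def sc (n : ℕ) : ℕ → ℤ := rec2 n 1 (2 * n + 1)
/-- d i : d 0 = 1, d 1 = 1. -/
def sd (n : ℕ) : ℕ → ℤ := rec2 n 1 1

/-- X(i,k) = H(2k)·(a i + b i) + 2·P(2k)·n·(b i). -/
def XX (n i k : ℕ) : ℤ :=
  (hpell (2*k) : ℤ) * (sa n i + sb n i) + 2 * (pell (2*k) : ℤ) * n * sb n i

/-- Δ(i,k) = P(2k)·(a i + b i) + H(2k)·n·(b i). -/
def DD (n i k : ℕ) : ℤ :=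
  (pell (2*k) : ℤ) * (sa n i + sb n i) + (hpell (2*k) : ℤ) * n * sb n i

/-- a(i,k) = (X(i,k) + (a i − b i))/2. -/
def aik (n i k : ℕ) : ℤ := (XX n i k + (sa n i - sb n i)) / 2
/-- b(i,k) = (X(i,k) − (a i − b i))/2. -/
def bik (n i k : ℕ) : ℤ := (XX n i k - (sa n i - sb n i)) / 2
/-- c(i,k) = X(i,k) + Δ(i,k). -/
def cik (n i k : ℕ) : ℤ := XX n i k + DD n i k
/-- d(i,k) = X(i,k) − Δ(i,k). -/
def dik (n i k : ℕ) : ℤ := XX n i k - DD n i k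

/-- √(n²−1). -/
noncomputable def sqn (n : ℕ) : ℝ := Real.sqrt ((n : ℝ)^2 - 1)

/-- ω = n + √(n²−1). -/
noncomputable def om (n : ℕ) : ℝ := n + sqn n

/-- L(n,k) = (H(2k)·(√(n²−1)+1) + 2n·P(2k) + (√(n²−1)−1)) /
(H(2k)·(√(n²−1)+1) + 2n·P(2k) − (√(n²−1)−1)). -/
noncomputable def L (n k : ℕ) : ℝ :=
  ((hpell (2*k) : ℝ) * (sqn n + 1) + 2*n*(pell (2*k) : ℝ) + (sqn n - 1)) /
  ((hpell (2*k) : ℝ) * (sqn n + 1) + 2*n*(pell (2*k) : ℝ) - (sqn n - 1))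

/-- S(n,0) = (√(n²−1)+1+n)/(√(n²−1)+1−n); for k ≥ 1,
S(n,k) = ((√(n²−1)+1)·P(2k+1) + n·H(2k+1)) / ((√(n²−1)+1)·P(2k−1) + n·H(2k−1)). -/
noncomputable def S (n k : ℕ) : ℝ :=
  if k = 0 then (sqn n + 1 + n) / (sqn n + 1 - n)
  else ((sqn n + 1) * (pell (2*k+1) : ℝ) + n * (hpell (2*k+1) : ℝ)) /
       ((sqn n + 1) * (pell (2*k-1) : ℝ) + n * (hpell (2*k-1) : ℝ))

/-! The pair `(a i, b i)` runs through the powers of the unit `n + √(n²-1)`, so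
`a i - √(n²-1) · b i = ω⁻ⁱ`. Clearing the denominator of `L(n,k)`, the combination
`a(i,k) - L(n,k) · b(i,k)` has numerator `2 (a i - √(n²-1) · b i) (H(2k) + n P(2k))`,
and the denominator of `L(n,k)` is at least `2` because `H(2k) ≥ 1`. -/

lemma hpell_odd : ∀ m, Odd (hpell m)
  | 0 => ⟨0, rfl⟩
  | 1 => ⟨0, rfl⟩
  | m + 2 => by
    obtain ⟨j, hj⟩ := hpell_odd m
    exact ⟨hpell (m + 1) + j, by simp only [hpell]; omega⟩

lemma rec2_add_two (n : ℕ) (x0 x1 : ℤ) (i : ℕ) :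
    rec2 n x0 x1 (i + 2) = 2 * n * rec2 n x0 x1 (i + 1) - rec2 n x0 x1 i := rfl

lemma sa_add_mul_sb_eq_pow {R : Type*} [CommRing R] (n : ℕ) {r : R}
    (hr : r ^ 2 = 2 * n * r - 1) (i : ℕ) :
    (sa n i : R) + (r - n) * sb n i = r ^ i := by
  induction i using Nat.twoStepInduction with
  | zero => simp [sa, sb, rec2]
  | one => simp [sa, sb, rec2]
  | more i ih0 ih1 =>
    simp only [sa, sb, rec2_add_two] at ih0 ih1 ⊢
    push_cast
    linear_combination (2 * n : R) * ih1 - ih0 - r ^ i * hr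

lemma om_mul_sub_sqn {n : ℕ} (hn : 1 ≤ n) : om n * (n - sqn n) = 1 := by
  have hsq : sqn n ^ 2 = (n : ℝ) ^ 2 - 1 :=
    Real.sq_sqrt (by nlinarith [(Nat.one_le_cast (α := ℝ)).mpr hn])
  unfold om
  linear_combination -hsq

lemma om_pos {n : ℕ} (hn : 1 ≤ n) : 0 < om n :=
  add_pos_of_pos_of_nonneg (by exact_mod_cast hn) (Real.sqrt_nonneg _)

lemma sa_sub_sqn_mul_sb {n : ℕ} (hn : 1 ≤ n) (i : ℕ) :
    (sa n i : ℝ) - sqn n * sb n i = om n ^ (-(i : ℤ)) := by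
  have hω := om_mul_sub_sqn hn
  have hr : ((n : ℝ) - sqn n) ^ 2 = 2 * n * (n - sqn n) - 1 := by
    unfold om at hω
    linear_combination -hω
  have hinv : (n : ℝ) - sqn n = (om n)⁻¹ := eq_inv_of_mul_eq_one_right hω
  rw [zpow_neg, zpow_natCast, ← inv_pow, ← hinv, ← sa_add_mul_sb_eq_pow n hr i]
  ring

/-- The division by `2` in `aik` is exact: `H(2k)` is odd, so `X(i,k) ≡ a i + b i (mod 2)`. -/
lemma two_mul_aik (n i k : ℕ) : 2 * aik n i k = XX n i k + (sa n i - sb n i) := by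
  obtain ⟨m, hm⟩ := hpell_odd (2 * k)
  refine Int.mul_ediv_cancel' ⟨m * (sa n i + sb n i) + pell (2 * k) * n * sb n i + sa n i, ?_⟩
  simp only [XX, hm]
  push_cast
  ring

lemma two_mul_bik (n i k : ℕ) : 2 * bik n i k = XX n i k - (sa n i - sb n i) := by
  obtain ⟨m, hm⟩ := hpell_odd (2 * k)
  refine Int.mul_ediv_cancel' ⟨m * (sa n i + sb n i) + pell (2 * k) * n * sb n i + sb n i, ?_⟩
  simp only [XX, hm]
  push_cast
  ring

lemma L_denom_pos (n k : ℕ) :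
    0 < (hpell (2 * k) : ℝ) * (sqn n + 1) + 2 * n * (pell (2 * k) : ℝ) - (sqn n - 1) := by
  have hH : (1 : ℝ) ≤ hpell (2 * k) := by exact_mod_cast (hpell_odd (2 * k)).pos
  have hs : 0 ≤ sqn n := Real.sqrt_nonneg _
  have hP : (0 : ℝ) ≤ 2 * n * (pell (2 * k) : ℝ) := by positivity
  nlinarith

lemma aik_sub_L_mul_bik (n i k : ℕ) :
    (aik n i k : ℝ) - L n k * bik n i k =
      2 * ((sa n i : ℝ) - sqn n * sb n i) * ((hpell (2 * k) : ℝ) + n * (pell (2 * k) : ℝ)) /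
        ((hpell (2 * k) : ℝ) * (sqn n + 1) + 2 * n * (pell (2 * k) : ℝ) - (sqn n - 1)) := by
  have ha : (2 * aik n i k : ℝ) = XX n i k + (sa n i - sb n i) := by
    exact_mod_cast two_mul_aik n i k
  have hb : (2 * bik n i k : ℝ) = XX n i k - (sa n i - sb n i) := by
    exact_mod_cast two_mul_bik n i k
  have hD := (L_denom_pos n k).ne'
  rw [eq_div_iff hD, L, div_mul_eq_mul_div, sub_mul, div_mul_cancel₀ _ hD]
  simp only [XX] at ha hb
  push_cast at ha hb
  linear_combination
    ((hpell (2 * k) : ℝ) * (sqn n + 1) + 2 * n * (pell (2 * k) : ℝ) - (sqn n - 1)) / 2 * ha -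
    ((hpell (2 * k) : ℝ) * (sqn n + 1) + 2 * n * (pell (2 * k) : ℝ) + (sqn n - 1)) / 2 * hb

theorem stmt_6 (n i k : ℕ) (hn : 2 ≤ n) :
    ((aik n i k : ℝ) - L n k * (bik n i k : ℝ) =
      2 * om n ^ (-(i:ℤ)) * ((hpell (2*k) : ℝ) + n * (pell (2*k) : ℝ)) /
        ((hpell (2*k) : ℝ) * (sqn n + 1) + 2*n*(pell (2*k) : ℝ) - (sqn n - 1))) ∧
    (aik n i k : ℝ) > L n k * (bik n i k : ℝ) := by
  have hn1 : 1 ≤ n := by omega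
  have heq := aik_sub_L_mul_bik n i k
  rw [sa_sub_sqn_mul_sb hn1] at heq
  refine ⟨heq, sub_pos.mp ?_⟩
  have hH : (0 : ℝ) < hpell (2 * k) := by exact_mod_cast (hpell_odd (2 * k)).pos
  have hω := zpow_pos (om_pos hn1) (-(i : ℤ))
  rw [heq]
  exact div_pos (by positivity) (L_denom_pos n k)
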